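/- Right-wing asymptotics with given limit price (Jacquier–Keller-Ressel form): suppose c : ℝ → (0,1) satisfies c(k) → u as k → ∞ for some 0 < u < 1, with (1-e^k)^+ ≤ c(k) < 1. Then Y_BS(k, c(k)) = √(2k) + Φ^{-1}(u) + O(1/√k + |c(k) - u|) as k → ∞. -/

import Mathlib

open MeasureTheory Real Filter Asymptotics Set

/-- Standard normal density. -/
noncomputable def phi (z : ℝ) : ℝ := (Real.sqrt (2 * Real.pi))⁻¹ * Real.exp (-z ^ 2 / 2)

/-- Standard normal CDF. -/
noncomputable def Phi (x : ℝ) : ℝ := ∫ z in Set.Iic x, phi z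

/-- Black–Scholes normalized call price. -/
noncomputable def CBS (k y : ℝ) : ℝ :=
  if 0 < y then Phi (-k / y + y / 2) - Real.exp k * Phi (-k / y - y / 2)
  else max (1 - Real.exp k) 0

/-- Implied total standard deviation: inverse of `CBS k` on `[0,∞)`. -/
noncomputable def YBS (k c : ℝ) : ℝ := sInf {y : ℝ | 0 ≤ y ∧ CBS k y = c}

/-- Inverse of the standard normal CDF on (0,1). -/
noncomputable def PhiInv (u : ℝ) : ℝ := sInf {x : ℝ | u ≤ Phi x}

/-- Extended-real quantile with the convention `Φ⁻¹(u) = +∞` for `u ≥ 1`, `-∞` for `u ≤ 0`. -/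
noncomputable def PhiInvE (u : ℝ) : EReal :=
  if 1 ≤ u then ⊤ else if u ≤ 0 then ⊥ else ((PhiInv u : ℝ) : EReal)

/-!
Write `y = √(2k) + x`. Then `d₁ = -k/y + y/2 = x - x²/(2y)`, and Mills' ratio gives
`eᵏ Φ(-d₂) ≤ 1/√(2k)`, so for `2|x| ≤ √(2k)`
`Φ(x) - (x² + 1)/√(2k) ≤ C_BS(k, √(2k) + x) ≤ Φ(x)`.
With `z = Φ⁻¹(u)` and `x = z ± e`, where `e` is a fixed multiple of `1/√k + |c(k) - u|`, the
increment `Φ(z ± e) - u ≈ ± φ e` dominates both error terms, so `c(k)` lies strictly between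
the prices at `√(2k) + z - e` and `√(2k) + z + e`; since `C_BS(k, ·)` is strictly increasing,
`Y_BS(k, c(k))` lies in that interval.
-/

open ProbabilityTheory Topology

lemma phi_eq_gaussianPDFReal : phi = gaussianPDFReal 0 1 := by
  ext z
  simp [phi, gaussianPDFReal]

lemma phi_pos (z : ℝ) : 0 < phi z := by
  rw [phi_eq_gaussianPDFReal]; exact gaussianPDFReal_pos _ _ _ one_ne_zero

lemma integrable_phi : Integrable phi := by
  rw [phi_eq_gaussianPDFReal]; exact integrable_gaussianPDFReal _ _

lemma integral_phi : ∫ z, phi z = 1 := by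
  rw [phi_eq_gaussianPDFReal]; exact integral_gaussianPDFReal_eq_one _ one_ne_zero

lemma continuous_phi : Continuous phi := by
  unfold phi; fun_prop

lemma phi_neg (z : ℝ) : phi (-z) = phi z := by
  simp [phi]

lemma phi_le_phi_of_abs_le {z B : ℝ} (h : |z| ≤ B) : phi B ≤ phi z := by
  have hsq : z ^ 2 ≤ B ^ 2 := by simpa only [sq_abs] using pow_le_pow_left₀ (abs_nonneg z) h 2
  unfold phi
  gcongr

lemma phi_le_one (z : ℝ) : phi z ≤ 1 := by
  have h2π : 1 ≤ √(2 * π) := Real.one_le_sqrt.2 (by nlinarith [Real.pi_gt_three])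
  have hexp : rexp (-z ^ 2 / 2) ≤ 1 := Real.exp_le_one_iff.2 (by nlinarith [sq_nonneg z])
  calc phi z ≤ (√(2 * π))⁻¹ * 1 := by unfold phi; gcongr
    _ ≤ 1 := by simpa using inv_le_one_of_one_le₀ h2π

lemma hasDerivAt_phi (z : ℝ) : HasDerivAt phi (-z * phi z) z := by
  have h : HasDerivAt (fun w : ℝ => -w ^ 2 / 2) (-z) z := by
    refine (((hasDerivAt_pow 2 z).neg).div_const 2).congr_deriv ?_
    ring
  refine ((h.exp).const_mul (√(2 * π))⁻¹).congr_deriv ?_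
  simp only [phi]; ring

lemma tendsto_phi_atBot : Tendsto phi atBot (𝓝 0) := by
  have hsq : Tendsto (fun z : ℝ => z ^ 2) atBot atTop := by
    simpa [Function.comp_def] using
      (tendsto_pow_atTop (α := ℝ) two_ne_zero).comp tendsto_neg_atBot_atTop
  have h := (tendsto_exp_atBot.comp ((tendsto_neg_atTop_atBot.comp hsq).atBot_div_const
    two_pos)).const_mul (√(2 * π))⁻¹
  rw [mul_zero] at h
  exact h.congr fun z => by simp [phi, neg_div]

lemma integrable_neg_mul_phi : Integrable fun z => -z * phi z := by
  convert (integrable_mul_exp_neg_mul_sq (b := 1 / 2) one_half_pos).const_mul (-(√(2 * π))⁻¹)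
    using 2 with z
  unfold phi; ring_nf

lemma setIntegral_Iic_neg_mul_phi (a : ℝ) : ∫ z in Iic a, -z * phi z = phi a := by
  rw [integral_Iic_of_hasDerivAt_of_tendsto' (fun x _ => hasDerivAt_phi x)
    integrable_neg_mul_phi.integrableOn tendsto_phi_atBot, sub_zero]

lemma Phi_sub_Phi (a b : ℝ) : Phi b - Phi a = ∫ z in a..b, phi z :=
  intervalIntegral.integral_Iic_sub_Iic integrable_phi.integrableOn integrable_phi.integrableOn

lemma hasDerivAt_Phi (x : ℝ) : HasDerivAt Phi (phi x) x := by
  have h : HasDerivAt (fun y => Phi 0 + ∫ z in (0 : ℝ)..y, phi z) (phi x) x :=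
    (intervalIntegral.integral_hasDerivAt_right integrable_phi.intervalIntegrable
      (continuous_phi.stronglyMeasurableAtFilter _ _) continuous_phi.continuousAt).const_add _
  exact h.congr_of_eventuallyEq (.of_forall fun y => by simp [← Phi_sub_Phi])

lemma continuous_Phi : Continuous Phi :=
  continuous_iff_continuousAt.2 fun x => (hasDerivAt_Phi x).continuousAt

lemma strictMono_Phi : StrictMono Phi :=
  strictMono_of_hasDerivAt_pos hasDerivAt_Phi phi_pos

lemma Phi_nonneg (x : ℝ) : 0 ≤ Phi x :=
  setIntegral_nonneg measurableSet_Iic fun z _ => (phi_pos z).le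

lemma Phi_add_Phi_neg (x : ℝ) : Phi x + Phi (-x) = 1 := by
  have h : Phi (-x) = ∫ z in Ioi x, phi z := by
    rw [Phi]
    simpa [phi_neg] using integral_comp_neg_Iic (-x) phi
  rw [h, ← integral_phi]
  exact intervalIntegral.integral_Iic_add_Ioi integrable_phi.integrableOn
    integrable_phi.integrableOn

lemma Phi_neg_le {x : ℝ} (hx : 0 < x) : Phi (-x) ≤ phi x / x := by
  calc Phi (-x) ≤ ∫ z in Iic (-x), -z * phi z / x := by
        refine setIntegral_mono_on integrable_phi.integrableOn
          (integrable_neg_mul_phi.div_const x).integrableOn measurableSet_Iic fun z hz => ?_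
        have h1 : 1 ≤ -z / x := by rw [le_div_iff₀ hx]; linarith [mem_Iic.1 hz]
        rw [mul_div_right_comm]
        nlinarith [phi_pos z]
    _ = phi x / x := by rw [integral_div, setIntegral_Iic_neg_mul_phi, phi_neg]

lemma Phi_neg_le_inv {x : ℝ} (hx : 0 < x) : Phi (-x) ≤ x⁻¹ :=
  (Phi_neg_le hx).trans (by simpa using div_le_div_of_nonneg_right (phi_le_one x) hx.le)

lemma Phi_PhiInv {u : ℝ} (hu0 : 0 < u) (hu1 : u < 1) : Phi (PhiInv u) = u := by
  have hlow : Phi (-u⁻¹) ≤ u := by simpa using Phi_neg_le_inv (inv_pos.2 hu0)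
  have hhigh : u ≤ Phi (1 - u)⁻¹ := by
    linarith [Phi_add_Phi_neg (1 - u)⁻¹, Phi_neg_le_inv (inv_pos.2 (sub_pos.2 hu1)),
      inv_inv (1 - u)]
  obtain ⟨x, hx⟩ :=
    mem_range_of_exists_le_of_exists_ge continuous_Phi ⟨_, hlow⟩ ⟨_, hhigh⟩
  have hset : {y : ℝ | u ≤ Phi y} = Ici x := by
    ext y
    show u ≤ Phi y ↔ x ≤ y
    rw [← hx, strictMono_Phi.le_iff_le]
  rw [PhiInv, hset, csInf_Ici, hx]

lemma Phi_sub_Phi_le {a b : ℝ} (hab : a ≤ b) : Phi b - Phi a ≤ b - a := by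
  rw [Phi_sub_Phi]
  calc ∫ z in a..b, phi z ≤ ∫ _ in a..b, (1 : ℝ) :=
        intervalIntegral.integral_mono_on hab integrable_phi.intervalIntegrable
          intervalIntegrable_const fun z _ => phi_le_one z
    _ = b - a := by simp

lemma mul_phi_le_Phi_sub_Phi {a b B : ℝ} (hab : a ≤ b) (ha : -B ≤ a) (hb : b ≤ B) :
    (b - a) * phi B ≤ Phi b - Phi a := by
  rw [Phi_sub_Phi]
  calc (b - a) * phi B = ∫ _ in a..b, phi B := by simp [mul_comm]
    _ ≤ ∫ z in a..b, phi z :=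
        intervalIntegral.integral_mono_on hab intervalIntegrable_const
          integrable_phi.intervalIntegrable fun z hz =>
            phi_le_phi_of_abs_le (abs_le.2 ⟨by linarith [hz.1], by linarith [hz.2]⟩)

lemma CBS_of_pos {k y : ℝ} (hy : 0 < y) :
    CBS k y = Phi (-k / y + y / 2) - rexp k * Phi (-k / y - y / 2) := if_pos hy

lemma CBS_zero {k : ℝ} (hk : 0 ≤ k) : CBS k 0 = 0 := by
  simp [CBS, Real.one_le_exp hk]

lemma exp_mul_phi_sub_half {k y : ℝ} (hy : y ≠ 0) :
    rexp k * phi (-k / y - y / 2) = phi (-k / y + y / 2) := by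
  unfold phi
  rw [mul_left_comm, ← Real.exp_add]
  congr 2
  field_simp
  ring

lemma hasDerivAt_CBS (k : ℝ) {y : ℝ} (hy : 0 < y) :
    HasDerivAt (CBS k) (phi (-k / y + y / 2)) y := by
  have hinv : HasDerivAt (fun w : ℝ => -k / w) (k / y ^ 2) y := by
    simp only [div_eq_mul_inv]
    refine (((hasDerivAt_id y).inv hy.ne').const_mul (-k)).congr_deriv ?_
    simp; ring
  have hhalf : HasDerivAt (fun w : ℝ => w / 2) (1 / 2) y := (hasDerivAt_id y).div_const 2
  have h := ((hasDerivAt_Phi _).comp y (hinv.add hhalf)).sub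
    (((hasDerivAt_Phi _).comp y (hinv.sub hhalf)).const_mul (rexp k))
  refine (h.congr_deriv ?_).congr_of_eventuallyEq
    (eventually_gt_nhds hy |>.mono fun w hw => CBS_of_pos hw)
  simp only [Pi.add_apply, Pi.sub_apply]
  rw [← mul_assoc, exp_mul_phi_sub_half hy.ne']
  ring

lemma strictMonoOn_CBS (k : ℝ) : StrictMonoOn (CBS k) (Ioi 0) :=
  strictMonoOn_of_hasDerivWithinAt_pos (convex_Ioi 0)
    (fun _ hy => (hasDerivAt_CBS k hy).continuousAt.continuousWithinAt)
    (fun _ hy => (hasDerivAt_CBS k (interior_subset hy)).hasDerivWithinAt)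
    fun _ _ => phi_pos _

lemma YBS_mem_Icc {k c y₁ y₂ : ℝ} (hk : 0 ≤ k) (hc : 0 < c) (hy₁ : 0 < y₁) (hy₁₂ : y₁ ≤ y₂)
    (h₁ : CBS k y₁ < c) (h₂ : c ≤ CBS k y₂) : YBS k c ∈ Icc y₁ y₂ := by
  have hcont : ContinuousOn (CBS k) (Icc y₁ y₂) := fun y hy =>
    (hasDerivAt_CBS k (hy₁.trans_le hy.1)).continuousAt.continuousWithinAt
  obtain ⟨y₀, hy₀, hy₀c⟩ := intermediate_value_Icc hy₁₂ hcont ⟨h₁.le, h₂⟩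
  have hsol : y₀ ∈ {y | 0 ≤ y ∧ CBS k y = c} := ⟨(hy₁.trans_le hy₀.1).le, hy₀c⟩
  have hlower : ∀ y ∈ {y | 0 ≤ y ∧ CBS k y = c}, y₁ ≤ y := by
    rintro y ⟨hy0, rfl⟩
    by_contra! hlt
    rcases hy0.eq_or_lt with rfl | hy
    · exact hc.ne' (CBS_zero hk)
    · exact h₁.not_gt (strictMonoOn_CBS k hy hy₁ hlt)
  exact ⟨le_csInf ⟨y₀, hsol⟩ hlower,
    (csInf_le ⟨0, fun y hy => hy.1⟩ hsol).trans hy₀.2⟩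

lemma neg_div_add_half_eq {k y : ℝ} (hk : 0 ≤ k) (hy : 0 < y) :
    -k / y + y / 2 = (y - √(2 * k)) - (y - √(2 * k)) ^ 2 / (2 * y) := by
  have hs : √(2 * k) ^ 2 = 2 * k := Real.sq_sqrt (by linarith)
  generalize √(2 * k) = s at hs ⊢
  field_simp
  linear_combination hs

lemma div_add_half_eq {k y : ℝ} (hk : 0 ≤ k) (hy : 0 < y) :
    k / y + y / 2 = √(2 * k) + (y - √(2 * k)) ^ 2 / (2 * y) := by
  have hs : √(2 * k) ^ 2 = 2 * k := Real.sq_sqrt (by linarith)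
  generalize √(2 * k) = s at hs ⊢
  field_simp
  linear_combination -hs

lemma exp_mul_Phi_neg_div_sub_half_le {k y : ℝ} (hk : 0 < k) (hy : 0 < y) :
    rexp k * Phi (-k / y - y / 2) ≤ 1 / √(2 * k) := by
  have hsd : √(2 * k) ≤ k / y + y / 2 := by
    rw [div_add_half_eq hk.le hy]; exact le_add_of_nonneg_right (by positivity)
  have hs : 0 < √(2 * k) := Real.sqrt_pos.2 (by linarith)
  have hd : 0 < k / y + y / 2 := hs.trans_le hsd
  calc rexp k * Phi (-k / y - y / 2) = rexp k * Phi (-(k / y + y / 2)) := by ring_nf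
    _ ≤ rexp k * (phi (k / y + y / 2) / (k / y + y / 2)) := by gcongr; exact Phi_neg_le hd
    _ = phi (-k / y + y / 2) / (k / y + y / 2) := by
        rw [← mul_div_assoc, ← exp_mul_phi_sub_half hy.ne', ← phi_neg]; ring_nf
    _ ≤ 1 / (k / y + y / 2) := by gcongr; exact phi_le_one _
    _ ≤ 1 / √(2 * k) := by gcongr

lemma CBS_sqrt_add_le_Phi {k x : ℝ} (hk : 0 ≤ k) (hy : 0 < √(2 * k) + x) :
    CBS k (√(2 * k) + x) ≤ Phi x := by
  have hd₁ : -k / (√(2 * k) + x) + (√(2 * k) + x) / 2 ≤ x := by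
    rw [neg_div_add_half_eq hk hy, add_sub_cancel_left]
    exact sub_le_self _ (by positivity)
  rw [CBS_of_pos hy]
  linarith [strictMono_Phi.monotone hd₁, mul_nonneg (Real.exp_pos k).le (Phi_nonneg
    (-k / (√(2 * k) + x) - (√(2 * k) + x) / 2))]

lemma Phi_sub_le_CBS_sqrt_add {k x : ℝ} (hk : 0 < k) (hx : 2 * |x| ≤ √(2 * k)) :
    Phi x - (x ^ 2 + 1) / √(2 * k) ≤ CBS k (√(2 * k) + x) := by
  set y := √(2 * k) + x
  have hs : 0 < √(2 * k) := Real.sqrt_pos.2 (by linarith)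
  have hsy : √(2 * k) ≤ 2 * y := by linarith [neg_abs_le x]
  have hy : 0 < y := by linarith
  have hd₁ : x - x ^ 2 / (2 * y) = -k / y + y / 2 := by
    rw [neg_div_add_half_eq hk.le hy, add_sub_cancel_left]
  have hsq : x ^ 2 / (2 * y) ≤ x ^ 2 / √(2 * k) := by gcongr
  have hlip := Phi_sub_Phi_le (sub_le_self x (by positivity : 0 ≤ x ^ 2 / (2 * y)))
  rw [CBS_of_pos hy, ← hd₁, add_div]
  linarith [exp_mul_Phi_neg_div_sub_half_le hk hy]

lemma abs_YBS_sub_le {k c z e B : ℝ} (hk : 0 < k) (hc : 0 < c) (he : 0 < e)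
    (hzB : |z| + e ≤ B) (hBk : 2 * B ≤ √(2 * k))
    (hup : c + (B ^ 2 + 1) / √(2 * k) ≤ Phi z + e * phi B) (hdn : Phi z - e * phi B < c) :
    |YBS k c - (√(2 * k) + z)| ≤ e := by
  obtain ⟨hzl, hzu⟩ := abs_le.1 (le_refl |z|)
  have hze : |z + e| ≤ B := abs_le.2 ⟨by linarith, by linarith⟩
  have hlow : CBS k (√(2 * k) + (z - e)) < c := by
    have := mul_phi_le_Phi_sub_Phi (a := z - e) (b := z) (B := B) (by linarith) (by linarith)
      (by linarith)
    linarith [CBS_sqrt_add_le_Phi hk.le (x := z - e) (by linarith)]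
  have hhigh : c ≤ CBS k (√(2 * k) + (z + e)) := by
    have := mul_phi_le_Phi_sub_Phi (a := z) (b := z + e) (B := B) (by linarith) (by linarith)
      (by linarith)
    have hsq : ((z + e) ^ 2 + 1) / √(2 * k) ≤ (B ^ 2 + 1) / √(2 * k) := by
      have := pow_le_pow_left₀ (abs_nonneg _) hze 2
      rw [sq_abs] at this
      gcongr ?_ / _
      linarith
    linarith [Phi_sub_le_CBS_sqrt_add hk (x := z + e) (by linarith)]
  have hY := YBS_mem_Icc hk.le hc (by linarith) (by linarith) hlow hhigh
  rw [abs_le]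
  constructor <;> linarith [hY.1, hY.2]

lemma abs_YBS_sub_le_mul {u c k z B : ℝ} (hz : Phi z = u) (hzB : |z| + 1 ≤ B) (hk : 0 < k)
    (hc : 0 < c) (hBk : 2 * B ≤ √(2 * k))
    (hsmall : (B ^ 2 + 2) / phi B * (1 / √k + |c - u|) ≤ 1) :
    |YBS k c - (√(2 * k) + z)| ≤ (B ^ 2 + 2) / phi B * (1 / √k + |c - u|) := by
  set D := 1 / √k + |c - u|
  -- `e := (B² + 2) / φ(B) * D` makes the gain `φ(B) e = (B² + 2) D` exceed
  -- `|c - u| + (B² + 1)/√(2k)` on either side.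
  have hsk : 0 < √k := Real.sqrt_pos.2 hk
  have hD : 0 < D := by positivity
  have hmul : (B ^ 2 + 2) / phi B * D * phi B = (B ^ 2 + 2) * D := by
    field_simp [(phi_pos B).ne']
  have hcu := abs_le.1 (le_refl |c - u|)
  have hcuD : |c - u| ≤ D := le_add_of_nonneg_left (by positivity)
  have hsqrt : (B ^ 2 + 1) / √(2 * k) ≤ (B ^ 2 + 1) * D :=
    calc (B ^ 2 + 1) / √(2 * k) ≤ (B ^ 2 + 1) / √k := by
          gcongr; linarith
      _ = (B ^ 2 + 1) * (1 / √k) := by ring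
      _ ≤ (B ^ 2 + 1) * D := by gcongr; exact le_add_of_nonneg_right (abs_nonneg _)
  refine abs_YBS_sub_le hk hc (mul_pos (div_pos (by positivity) (phi_pos B)) hD) (by linarith)
    hBk ?_ ?_ <;> rw [hmul, hz]
  · linarith [hcu.2]
  · linarith [hcu.1, mul_pos (by positivity : (0 : ℝ) < B ^ 2 + 1) hD]

theorem stmt_19_general (c : ℝ → ℝ) (u : ℝ) (hu0 : 0 < u) (hu1 : u < 1)
    (hlim : Tendsto c atTop (nhds u)) :
    (fun k : ℝ => YBS k (c k) - (Real.sqrt (2 * k) + PhiInv u)) =O[atTop]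
      (fun k : ℝ => 1 / Real.sqrt k + |c k - u|) := by
  set B := |PhiInv u| + 1
  set M := (B ^ 2 + 2) / phi B
  have hD : Tendsto (fun k => 1 / √k + |c k - u|) atTop (𝓝 0) := by
    simpa using (tendsto_inv_atTop_zero.comp tendsto_sqrt_atTop).add
      (hlim.sub_const u).abs
  have hsqrt : Tendsto (fun k => √(2 * k)) atTop atTop :=
    tendsto_sqrt_atTop.comp (tendsto_id.const_mul_atTop two_pos)
  refine isBigO_iff.2 ⟨M, ?_⟩
  filter_upwards [eventually_gt_atTop 0, hsqrt.eventually_ge_atTop (2 * B),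
    hlim.eventually (lt_mem_nhds hu0),
    (hD.const_mul M).eventually (ge_mem_nhds (show M * 0 < 1 by simp))] with k hk hBk hc hsmall
  rw [Real.norm_eq_abs, Real.norm_of_nonneg (by positivity)]
  exact abs_YBS_sub_le_mul (Phi_PhiInv hu0 hu1) le_rfl hk hc hBk hsmall

theorem stmt_19 (c : ℝ → ℝ) (u : ℝ) (hu0 : 0 < u) (hu1 : u < 1)
    (hdom : ∀ k : ℝ, max (1 - Real.exp k) 0 ≤ c k ∧ c k < 1)
    (hlim : Tendsto c atTop (nhds u)) :
    (fun k : ℝ => YBS k (c k) - (Real.sqrt (2 * k) + PhiInv u)) =O[atTop]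
      (fun k : ℝ => 1 / Real.sqrt k + |c k - u|) :=
  stmt_19_general c u hu0 hu1 hlim
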